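/- The m-bonacci word factors as the concatenation of all p-singular words: w_m = z_0 z_1 z_2 ⋯. Equivalently, for every n ≥ 0, the word z_0 z_1 ⋯ z_{n−1} is a prefix of w_m, and the lengths |z_0 z_1 ⋯ z_{n−1}| tend to infinity. -/

import Mathlib

/-- The finite word `u` occurs at position `j` in the infinite word `w`. -/
def OccursAt (u : List ℕ) (w : ℕ → ℕ) (j : ℕ) : Prop :=
  ∀ i < u.length, w (j + i) = u.getD i 0

/-- The finite word `u` is a prefix of the infinite word `w`. -/
def InfPrefix (u : List ℕ) (w : ℕ → ℕ) : Prop :=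
  OccursAt u w 0

/-- The suffix of the infinite word `w` starting at position `j`. -/
def suffixFrom (w : ℕ → ℕ) (j : ℕ) : ℕ → ℕ :=
  fun i => w (j + i)

/-- The finite word `u` is a palindrome. -/
def Pal (u : List ℕ) : Prop := u.reverse = u
/-- The `m`-bonacci morphism `φ_m` on letters:
`φ_m(k) = 0·(k+1)` for `0 ≤ k ≤ m-2`, and `φ_m(m-1) = 0`. -/
def phiL (m a : ℕ) : List ℕ := if a = m - 1 then [0] else [0, a + 1]

/-- The `m`-bonacci morphism applied to a finite word. -/
def phiW (m : ℕ) (u : List ℕ) : List ℕ := u.flatMap (phiL m)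

/-- The iterates `h n = φ_mⁿ(0)`. -/
def hword (m : ℕ) : ℕ → List ℕ
  | 0 => [0]
  | n + 1 => phiW m (hword m n)

/-- The `m`-bonacci word, the infinite fixed point of `φ_m` beginning with `0`
(its `i`-th letter is the `i`-th letter of any sufficiently long iterate `φ_mⁿ(0)`). -/
def mbon (m : ℕ) : ℕ → ℕ := fun i => (hword m (i + 1)).getD i 0

/-- Auxiliary course-of-values construction for the p-singular words:
`zsAux m (k+1) i` gives the correct value of the (index-shifted) p-singular word
`z_{i-1}` for every `i ≤ k`. -/
def zsAux (m : ℕ) : ℕ → ℕ → List ℕ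
  | 0, _ => []
  | k + 1, i =>
    if i < k then zsAux m k i
    else if i = 0 then []
    else if i = 1 then [0]
    else if i ≤ m then
      -- here `i = n+1` with `1 ≤ n ≤ m-1`:
      -- `z_n = z_{n-2} z_{n-3} ⋯ z_1 z_0 · n · z_0 z_1 ⋯ z_{n-3} z_{n-2}`
      (((List.range (i - 2)).map (fun j => zsAux m k (i - 2 - j))).flatten)
        ++ [i - 1]
        ++ (((List.range (i - 2)).map (fun j => zsAux m k (1 + j))).flatten)
    else
      -- here `i = n+1` with `n ≥ m`:
      -- `z_n = z_{n-2} ⋯ z_{n-(m-1)} · z_{n-m} · z_{n-(m+1)} · z_{n-m} · z_{n-(m-1)} ⋯ z_{n-2}`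
      (((List.range (m - 2)).map (fun j => zsAux m k (i - 2 - j))).flatten)
        ++ zsAux m k (i - m) ++ zsAux m k (i - m - 1) ++ zsAux m k (i - m)
        ++ (((List.range (m - 2)).map (fun j => zsAux m k (i - m + 1 + j))).flatten)

/-- The (index-shifted) p-singular words for the `m`-bonacci word:
`zsw m 0 = z₋₁ = ε`, and `zsw m (n+1) = zₙ` for `n ≥ 0`, where
`z₀ = 0`, `zₙ = z_{n-2} z_{n-3} ⋯ z_1 z_0 · n · z_0 z_1 ⋯ z_{n-3} z_{n-2}` for `1 ≤ n ≤ m-1`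
(`n` denoting the single letter `n`), and
`zₙ = z_{n-2} z_{n-3} ⋯ z_{n-(m-1)} z_{n-m} z_{n-(m+1)} z_{n-m} z_{n-(m-1)} ⋯ z_{n-3} z_{n-2}`
for `n ≥ m`. -/
def zsw (m k : ℕ) : List ℕ := zsAux m (k + 1) k

/-!
Write `E_j` for the one-letter word `0` when `j` is odd and for the empty word when `j` is even.
The heart of the proof is the identity `φ_m(z_{j-1}) E_{j+1} = E_j z_j` for all `j ≥ 0`: it holds
for `j ≤ 1` by inspection, and for larger `j` the recursive definition writes `z_{j-1}` and `z_j`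
as products of earlier p-singular words with the same shape, shifted by one index, so the identity
telescopes through these products. Telescoping once more through `z_0 z_1 ⋯ z_{n-1}` gives
`z_0 ⋯ z_n = φ_m(z_0 ⋯ z_{n-1}) E_{n+1}`. Since `w_m = φ_m(w_m)` and every `φ_m(a)` begins
with `0`, the word `φ_m(u) 0` is a prefix of `w_m` whenever `u` is, so every `z_0 ⋯ z_{n-1}` is a
prefix of `w_m`. Finally every `z_n` is nonempty, so these prefixes grow without bound.
-/

section WordProducts

variable {α : Type*}

lemma flatten_map_range_congr {r : ℕ} {f g : ℕ → List α} (h : ∀ j < r, f j = g j) :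
    ((List.range r).map f).flatten = ((List.range r).map g).flatten :=
  congrArg _ <| List.map_congr_left fun j hj => h j (List.mem_range.mp hj)

def ascProd (z : ℕ → List α) (r a : ℕ) : List α :=
  ((List.range r).map fun j => z (j + a)).flatten

def descProd (z : ℕ → List α) (r a : ℕ) : List α :=
  ((List.range r).reverse.map fun j => z (j + a)).flatten

variable (z : ℕ → List α) (r a : ℕ)

@[simp] lemma ascProd_zero : ascProd z 0 a = [] := rfl

@[simp] lemma descProd_zero : descProd z 0 a = [] := rfl

lemma ascProd_succ : ascProd z (r + 1) a = ascProd z r a ++ z (r + a) := by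
  simp [ascProd, List.range_succ]

lemma ascProd_succ' : ascProd z (r + 1) a = z a ++ ascProd z r (a + 1) := by
  simp [ascProd, List.range_succ_eq_map, Function.comp_def, add_assoc, add_comm 1 a]

lemma descProd_succ : descProd z (r + 1) a = z (r + a) ++ descProd z r a := by
  simp [descProd, List.range_succ]

lemma descProd_succ' : descProd z (r + 1) a = descProd z r (a + 1) ++ z a := by
  simp [descProd, List.range_succ_eq_map, Function.comp_def, add_assoc, add_comm 1 a]

lemma descProd_eq_flatten_map_range :
    descProd z r a = ((List.range r).map fun j => z (r - 1 - j + a)).flatten := by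
  rw [descProd, List.range_eq_range', List.reverse_range', List.map_map, ← List.range_eq_range']
  exact flatten_map_range_congr fun j hj => by simp

lemma le_length_ascProd {z : ℕ → List α} {r a : ℕ} (h : ∀ j < r, z (j + a) ≠ []) :
    r ≤ (ascProd z r a).length := by
  induction r with
  | zero => simp
  | succ r ih =>
    rw [ascProd_succ, List.length_append]
    have := List.length_pos_iff.mpr (h r r.lt_succ_self)
    have := ih fun j hj => h j (by omega)
    omega

end WordProducts

section Carries

def Carries {α : Type*} (g : α → List α) (u v e e' : List α) : Prop := u.flatMap g ++ e' = e ++ v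

variable {α : Type*} {g : α → List α}

lemma Carries.append {u₁ u₂ v₁ v₂ e₀ e₁ e₂ : List α} (h₁ : Carries g u₁ v₁ e₀ e₁)
    (h₂ : Carries g u₂ v₂ e₁ e₂) : Carries g (u₁ ++ u₂) (v₁ ++ v₂) e₀ e₂ := by
  unfold Carries at *
  rw [List.flatMap_append, List.append_assoc, h₂, ← List.append_assoc, h₁, List.append_assoc]

lemma carries_nil (e : List α) : Carries g [] [] e e := by simp [Carries]

variable {z e : ℕ → List α} {r a : ℕ}

lemma carries_ascProd (h : ∀ t < r + a, Carries g (z t) (z (t + 1)) (e t) (e (t + 1))) :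
    Carries g (ascProd z r a) (ascProd z r (a + 1)) (e a) (e (r + a)) := by
  induction r with
  | zero => simpa using carries_nil _
  | succ r ih =>
    rw [ascProd_succ, ascProd_succ, show r + (a + 1) = r + a + 1 by omega,
      show r + 1 + a = r + a + 1 by omega]
    exact (ih fun t ht => h t (by omega)).append (h _ (by omega))

lemma carries_descProd (he : ∀ t, e (t + 2) = e t)
    (h : ∀ t < r + a, Carries g (z t) (z (t + 1)) (e t) (e (t + 1))) :
    Carries g (descProd z r a) (descProd z r (a + 1)) (e (r + a + 1)) (e (a + 1)) := by
  induction r with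
  | zero => simpa using carries_nil _
  | succ r ih =>
    rw [descProd_succ, descProd_succ, show r + (a + 1) = r + a + 1 by omega,
      show r + 1 + a + 1 = r + a + 2 by omega, he]
    exact (h _ (by omega)).append (ih fun t ht => h t (by omega))

end Carries

lemma zsAux_eq_zsw (m : ℕ) {k i : ℕ} (h : i < k) : zsAux m k i = zsw m i := by
  induction k with
  | zero => omega
  | succ k ih =>
    rcases Nat.lt_succ_iff_lt_or_eq.mp h with h | rfl
    · rw [zsAux, if_pos h, ih h]
    · rfl

@[simp] lemma zsw_zero (m : ℕ) : zsw m 0 = [] := rfl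

@[simp] lemma zsw_one (m : ℕ) : zsw m 1 = [0] := rfl

lemma zsw_of_le {m i : ℕ} (hi : 2 ≤ i) (him : i ≤ m) :
    zsw m i = descProd (zsw m) (i - 2) 1 ++ [i - 1] ++ ascProd (zsw m) (i - 2) 1 := by
  have hD : ((List.range (i - 2)).map fun j => zsAux m i (i - 2 - j)).flatten =
      descProd (zsw m) (i - 2) 1 := by
    rw [descProd_eq_flatten_map_range]
    exact flatten_map_range_congr fun j hj => by rw [zsAux_eq_zsw m (by omega)]; congr 1; omega
  have hA : ((List.range (i - 2)).map fun j => zsAux m i (1 + j)).flatten =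
      ascProd (zsw m) (i - 2) 1 :=
    flatten_map_range_congr fun j hj => by rw [zsAux_eq_zsw m (by omega), add_comm]
  rw [zsw, zsAux, if_neg (lt_irrefl i), if_neg (by omega), if_neg (by omega), if_pos him, hD, hA]

lemma zsw_of_lt {m i : ℕ} (hm : 0 < m) (hmi : m < i) :
    zsw m i = descProd (zsw m) (m - 2) (i - m + 1) ++ zsw m (i - m) ++ zsw m (i - m - 1) ++
      zsw m (i - m) ++ ascProd (zsw m) (m - 2) (i - m + 1) := by
  have hD : ((List.range (m - 2)).map fun j => zsAux m i (i - 2 - j)).flatten =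
      descProd (zsw m) (m - 2) (i - m + 1) := by
    rw [descProd_eq_flatten_map_range]
    exact flatten_map_range_congr fun j hj => by rw [zsAux_eq_zsw m (by omega)]; congr 1; omega
  have hA : ((List.range (m - 2)).map fun j => zsAux m i (i - m + 1 + j)).flatten =
      ascProd (zsw m) (m - 2) (i - m + 1) :=
    flatten_map_range_congr fun j hj => by rw [zsAux_eq_zsw m (by omega), add_comm]
  rw [zsw, zsAux, if_neg (lt_irrefl i), if_neg (by omega), if_neg (by omega), if_neg (by omega),
    hD, hA, zsAux_eq_zsw m (by omega : i - m < i), zsAux_eq_zsw m (by omega : i - m - 1 < i)]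

def oddMark (t : ℕ) : List ℕ := if t % 2 = 1 then [0] else []

lemma oddMark_congr {s t : ℕ} (h : s % 2 = t % 2) : oddMark s = oddMark t := by
  simp [oddMark, h]

lemma oddMark_add_two (t : ℕ) : oddMark (t + 2) = oddMark t := oddMark_congr (by omega)

lemma oddMark_prefix (t : ℕ) : oddMark t <+: [0] := by
  unfold oddMark
  split_ifs <;> simp

lemma carries_zsw_of_lt {m j : ℕ} (hj : 2 ≤ j) (hjm : j < m)
    (ih : ∀ t < j, Carries (phiL m) (zsw m t) (zsw m (t + 1)) (oddMark t) (oddMark (t + 1))) :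
    Carries (phiL m) (zsw m j) (zsw m (j + 1)) (oddMark j) (oddMark (j + 1)) := by
  obtain ⟨q, rfl⟩ : ∃ q, j = q + 2 := ⟨j - 2, by omega⟩
  have hD : Carries (phiL m) (descProd (zsw m) q 1) (descProd (zsw m) q 2) (oddMark (q + 2)) [] :=
    carries_descProd oddMark_add_two fun t ht => ih t (by omega)
  have hmid : Carries (phiL m) [q + 1] [0, q + 2, 0] [] [0] := by
    simp [Carries, phiL, show q + 1 ≠ m - 1 by omega]
  have hA : Carries (phiL m) (ascProd (zsw m) q 1) (ascProd (zsw m) q 2) [0] (oddMark (q + 1)) :=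
    carries_ascProd fun t ht => ih t (by omega)
  rw [zsw_of_le (by omega) hjm.le, zsw_of_le (by omega) hjm, Nat.add_sub_cancel,
    show q + 2 + 1 - 2 = q + 1 by omega, show q + 2 + 1 - 1 = q + 2 by omega,
    descProd_succ', ascProd_succ', oddMark_congr (by omega : (q + 2 + 1) % 2 = (q + 1) % 2)]
  convert (hD.append hmid).append hA using 1 <;> simp

lemma carries_zsw_self {m : ℕ} (hm : 2 ≤ m)
    (ih : ∀ t < m, Carries (phiL m) (zsw m t) (zsw m (t + 1)) (oddMark t) (oddMark (t + 1))) :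
    Carries (phiL m) (zsw m m) (zsw m (m + 1)) (oddMark m) (oddMark (m + 1)) := by
  obtain ⟨q, rfl⟩ : ∃ q, m = q + 2 := ⟨m - 2, by omega⟩
  have hD : Carries (phiL (q + 2)) (descProd (zsw (q + 2)) q 1) (descProd (zsw (q + 2)) q 2)
      (oddMark (q + 2)) [] :=
    carries_descProd oddMark_add_two fun t ht => ih t (by omega)
  have hmid : Carries (phiL (q + 2)) [q + 1] [0, 0] [] [0] := by
    simp [Carries, phiL]
  have hA : Carries (phiL (q + 2)) (ascProd (zsw (q + 2)) q 1) (ascProd (zsw (q + 2)) q 2) [0]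
      (oddMark (q + 1)) :=
    carries_ascProd fun t ht => ih t (by omega)
  rw [zsw_of_le hm le_rfl, zsw_of_lt (by omega) (by omega), Nat.add_sub_cancel,
    show q + 2 + 1 - (q + 2) = 1 by omega, show 1 - 1 = 0 from rfl, zsw_one, zsw_zero,
    oddMark_congr (by omega : (q + 2 + 1) % 2 = (q + 1) % 2)]
  convert (hD.append hmid).append hA using 1 <;> simp

lemma carries_zsw_of_gt {m j : ℕ} (hm : 2 ≤ m) (hmj : m < j)
    (ih : ∀ t < j, Carries (phiL m) (zsw m t) (zsw m (t + 1)) (oddMark t) (oddMark (t + 1))) :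
    Carries (phiL m) (zsw m j) (zsw m (j + 1)) (oddMark j) (oddMark (j + 1)) := by
  obtain ⟨p, rfl⟩ : ∃ p, m = p + 2 := ⟨m - 2, by omega⟩
  obtain ⟨s, rfl⟩ : ∃ s, j = s + 1 + (p + 2) := ⟨j - (p + 2) - 1, by omega⟩
  rw [zsw_of_lt (by omega) hmj, zsw_of_lt (by omega) (by omega : p + 2 < s + 1 + (p + 2) + 1),
    show s + 1 + (p + 2) + 1 = s + 2 + (p + 2) by omega]
  simp only [Nat.add_sub_cancel]
  set z := zsw (p + 2)
  have hD : Carries (phiL (p + 2)) (descProd z p (s + 2)) (descProd z p (s + 3))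
      (oddMark (s + 1 + (p + 2))) (oddMark (s + 1 + 2)) := by
    rw [oddMark_congr (by omega : (s + 1 + (p + 2)) % 2 = (p + (s + 2) + 1) % 2)]
    exact carries_descProd oddMark_add_two fun t ht => ih t (by omega)
  have h₁ : Carries (phiL (p + 2)) (z (s + 1)) (z (s + 2)) (oddMark (s + 1 + 2))
      (oddMark (s + 2)) := by
    rw [oddMark_add_two]; exact ih (s + 1) (by omega)
  have h₂ : Carries (phiL (p + 2)) (z s) (z (s + 1)) (oddMark (s + 2)) (oddMark (s + 1)) := by
    rw [oddMark_add_two]; exact ih s (by omega)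
  have h₃ : Carries (phiL (p + 2)) (z (s + 1)) (z (s + 2)) (oddMark (s + 1)) (oddMark (s + 2)) :=
    ih (s + 1) (by omega)
  have hA : Carries (phiL (p + 2)) (ascProd z p (s + 2)) (ascProd z p (s + 3))
      (oddMark (s + 2)) (oddMark (s + 2 + (p + 2))) := by
    rw [oddMark_congr (by omega : (s + 2 + (p + 2)) % 2 = (p + (s + 2)) % 2)]
    exact carries_ascProd fun t ht => ih t (by omega)
  exact (((hD.append h₁).append h₂).append h₃).append hA

lemma carries_zsw {m : ℕ} (hm : 2 ≤ m) (j : ℕ) :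
    Carries (phiL m) (zsw m j) (zsw m (j + 1)) (oddMark j) (oddMark (j + 1)) := by
  induction j using Nat.strong_induction_on with
  | _ j ih =>
  rcases lt_trichotomy j m with hjm | rfl | hmj
  · match j with
    | 0 => simp [Carries, oddMark]
    | 1 => simp [Carries, oddMark, phiL, zsw_of_le le_rfl hm, show 0 ≠ m - 1 by omega]
    | j + 2 => exact carries_zsw_of_lt (by omega) hjm ih
  · exact carries_zsw_self hm ih
  · exact carries_zsw_of_gt hm hmj ih

lemma ascProd_zsw_succ {m : ℕ} (hm : 2 ≤ m) (n : ℕ) :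
    ascProd (zsw m) (n + 1) 1 = phiW m (ascProd (zsw m) n 1) ++ oddMark (n + 1) := by
  rw [ascProd_succ', zsw_one]
  exact (carries_ascProd (r := n) (a := 1) fun t _ => carries_zsw hm t).symm

lemma zsw_ne_nil {m : ℕ} (hm : 2 ≤ m) {k : ℕ} (hk : 1 ≤ k) : zsw m k ≠ [] := by
  induction k using Nat.strong_induction_on with
  | _ k ih =>
  rcases Nat.lt_or_ge m k with hmk | hkm
  · rw [zsw_of_lt (by omega) hmk]
    intro h
    simp only [List.append_eq_nil_iff] at h
    exact ih (k - m) (by omega) (by omega) h.1.1.1.2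
  · rcases Nat.lt_or_ge k 2 with hk2 | hk2
    · simp [show k = 1 by omega]
    · simp [zsw_of_le hk2 hkm]

lemma phiL_ne_nil (m a : ℕ) : phiL m a ≠ [] := by
  unfold phiL
  split_ifs <;> simp

lemma phiW_ne_nil (m : ℕ) {u : List ℕ} (hu : u ≠ []) : phiW m u ≠ [] := by
  obtain ⟨a, u, rfl⟩ := List.exists_cons_of_ne_nil hu
  simp [phiW, phiL_ne_nil]

lemma exists_hword_succ_eq_append {m : ℕ} (hm : 2 ≤ m) (n : ℕ) :
    ∃ t ≠ [], hword m (n + 1) = hword m n ++ t := by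
  induction n with
  | zero => exact ⟨[1], by simp [hword, phiW, phiL, show 0 ≠ m - 1 by omega]⟩
  | succ n ih =>
    obtain ⟨t, ht, heq⟩ := ih
    exact ⟨phiW m t, phiW_ne_nil m ht, (congrArg (phiW m) heq).trans List.flatMap_append⟩

lemma hword_prefix_hword {m : ℕ} (hm : 2 ≤ m) {a b : ℕ} (h : a ≤ b) :
    hword m a <+: hword m b := by
  induction b, h using Nat.le_induction with
  | base => exact List.prefix_refl _
  | succ b _ ih =>
    obtain ⟨t, -, heq⟩ := exists_hword_succ_eq_append hm b
    exact ih.trans ⟨t, heq.symm⟩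

lemma lt_length_hword {m : ℕ} (hm : 2 ≤ m) (n : ℕ) : n < (hword m n).length := by
  induction n with
  | zero => simp [hword]
  | succ n ih =>
    obtain ⟨t, ht, heq⟩ := exists_hword_succ_eq_append hm n
    have := List.length_pos_iff.mpr ht
    rw [heq, List.length_append]
    omega

lemma infPrefix_mbon_of_prefix_hword {m : ℕ} (hm : 2 ≤ m) {u : List ℕ} {N : ℕ}
    (h : u <+: hword m N) : InfPrefix u (mbon m) := by
  intro i hi
  have hM : hword m (i + 1) <+: hword m (i + 1 + N) := hword_prefix_hword hm (by omega)
  have hN : u <+: hword m (i + 1 + N) := h.trans (hword_prefix_hword hm (by omega))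
  have hi' : i < (hword m (i + 1)).length := (lt_length_hword hm (i + 1)).trans' (by omega)
  rw [zero_add, mbon, List.getD_eq_getElem _ _ hi', List.getD_eq_getElem _ _ hi,
    hM.getElem hi', hN.getElem hi]

lemma phiW_append_zero_prefix (m : ℕ) {u v : List ℕ} (h : u <+: v) (hlt : u.length < v.length) :
    phiW m u ++ [0] <+: phiW m v := by
  obtain ⟨_ | ⟨a, t⟩, rfl⟩ := h
  · simp at hlt
  · refine ⟨(phiL m a).tail ++ phiW m t, ?_⟩
    unfold phiL
    split_ifs <;> simp [phiW, phiL, *]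

lemma exists_prefix_hword_phiW_append_zero {m : ℕ} (hm : 2 ≤ m) {u : List ℕ} {N : ℕ}
    (h : u <+: hword m N) : ∃ M, phiW m u ++ [0] <+: hword m M := by
  have hM : u <+: hword m (N + u.length) := h.trans (hword_prefix_hword hm (by omega))
  have hlt : u.length < (hword m (N + u.length)).length :=
    (lt_length_hword hm _).trans_le' (by omega)
  exact ⟨N + u.length + 1, phiW_append_zero_prefix m hM hlt⟩

lemma exists_hword_prefix_ascProd_zsw {m : ℕ} (hm : 2 ≤ m) (n : ℕ) :
    ∃ N, ascProd (zsw m) n 1 <+: hword m N := by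
  induction n with
  | zero => exact ⟨0, List.nil_prefix⟩
  | succ n ih =>
    obtain ⟨N, hN⟩ := ih
    obtain ⟨M, hM⟩ := exists_prefix_hword_phiW_append_zero hm hN
    refine ⟨M, List.IsPrefix.trans ?_ hM⟩
    rw [ascProd_zsw_succ hm]
    exact (List.prefix_append_right_inj _).mpr (oddMark_prefix _)

/-- The `m`-bonacci word factors as the concatenation of all p-singular words:
`w_m = z₀ z₁ z₂ ⋯`. That is, for every `n ≥ 0` the word `z₀ z₁ ⋯ z_{n-1}` is a prefix
of `w_m`, and the lengths `|z₀ z₁ ⋯ z_{n-1}|` tend to infinity. -/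
theorem mbon_psingular_factorization (m : ℕ) (hm : 2 ≤ m) :
    (∀ n, InfPrefix (((List.range n).map (fun k => zsw m (k + 1))).flatten) (mbon m)) ∧
    (∀ N, ∃ n, N ≤ ((((List.range n).map (fun k => zsw m (k + 1))).flatten)).length) := by
  refine ⟨fun n => ?_, fun N => ⟨N, le_length_ascProd fun j _ => zsw_ne_nil hm (by omega)⟩⟩
  obtain ⟨N, hN⟩ := exists_hword_prefix_ascProd_zsw hm n
  exact infPrefix_mbon_of_prefix_hword hm hN
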